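/- arXiv:2102.10672 — 2 statements merged into one kernel-verified Lean document; each statement's English description precedes it below -/
import Mathlib

section
/- Fix n ≥ 3 and let x_n be the unique maximum point of p_n on [0,1]. If 0 ≤ x < y ≤ x_n, then p_m(x) < p_m(y) for every m ≥ n; that is, the y-strategy strictly dominates the x-strategy on the set {n, n+1, n+2, …}. -/
open Finset Real

/-- `p_n(x) = 1 - x - Σ_{k=2}^{n} (1-x)^k/(k(k-1))`, the winning probability of the
`x`-strategy with `n` items. -/
noncomputable def pwin (n : ℕ) (x : ℝ) : ℝ :=
  1 - x - ∑ k ∈ Finset.Icc 2 n, (1 - x) ^ k / ((k : ℝ) * ((k : ℝ) - 1))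

/-!
The derivative `p_n'(x) = -1 + Σ_{k=2}^{n} (1-x)^(k-1)/(k-1)` is strictly decreasing on `[0,1]`,
so `p_n` is strictly concave there and `p_n' > 0` left of its maximum point `x_n`. On `[0,1]` the
difference `p_m' - p_n'` is a sum of nonnegative terms, hence `p_m' > 0` on `[0, x_n)` as well.
-/

lemma StrictConcaveOn.pos_of_hasDerivAt_of_isMaxOn {S : Set ℝ} {f : ℝ → ℝ} {f' x xm : ℝ}
    (hfc : StrictConcaveOn ℝ S f) (hmax : IsMaxOn f S xm) (hx : x ∈ S) (hxm : xm ∈ S)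
    (hlt : x < xm) (hf : HasDerivAt f f' x) : 0 < f' := by
  have hslope : 0 ≤ slope f x xm := by
    rw [slope_def_field]
    exact div_nonneg (sub_nonneg.2 (hmax hx)) (sub_nonneg.2 hlt.le)
  exact hslope.trans_lt (hfc.slope_lt_of_hasDerivAt hx hxm hlt hf)

noncomputable def pwinDeriv (n : ℕ) (x : ℝ) : ℝ :=
  -1 + ∑ k ∈ Finset.Icc 2 n, (1 - x) ^ (k - 1) / ((k : ℝ) - 1)

lemma hasDerivAt_pwin (n : ℕ) (x : ℝ) : HasDerivAt (pwin n) (pwinDeriv n x) x := by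
  have hlin : HasDerivAt (fun x : ℝ => 1 - x) (-1) x := by
    simpa using (hasDerivAt_id x).const_sub 1
  have hterm : ∀ k ∈ Finset.Icc 2 n,
      HasDerivAt (fun x : ℝ => (1 - x) ^ k / ((k : ℝ) * ((k : ℝ) - 1)))
        (-((1 - x) ^ (k - 1) / ((k : ℝ) - 1))) x := by
    intro k hk
    have hk2 : (2 : ℝ) ≤ k := by exact_mod_cast (Finset.mem_Icc.mp hk).1
    refine ((hlin.fun_pow k).div_const _).congr_deriv ?_
    field_simp [show (k : ℝ) - 1 ≠ 0 by linarith]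
  refine (hlin.sub (HasDerivAt.fun_sum hterm)).congr_deriv ?_
  rw [Finset.sum_neg_distrib, pwinDeriv]
  ring

lemma deriv_pwin (n : ℕ) : deriv (pwin n) = pwinDeriv n :=
  funext fun x => (hasDerivAt_pwin n x).deriv

lemma continuous_pwin (n : ℕ) : Continuous (pwin n) :=
  continuous_iff_continuousAt.2 fun x => (hasDerivAt_pwin n x).continuousAt

lemma pwinDeriv_strictAntiOn {n : ℕ} (hn : 2 ≤ n) :
    StrictAntiOn (pwinDeriv n) (Set.Icc 0 1) := by
  intro a ha b hb hab
  refine add_lt_add_right (Finset.sum_lt_sum (fun k hk => ?_) ⟨2, ?_, ?_⟩) _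
  · have hk2 : (2 : ℝ) ≤ k := by exact_mod_cast (Finset.mem_Icc.mp hk).1
    gcongr <;> linarith [hb.2]
  · exact Finset.mem_Icc.2 ⟨le_rfl, hn⟩
  · norm_num
    linarith

lemma pwinDeriv_le_pwinDeriv {n m : ℕ} (hnm : n ≤ m) {x : ℝ} (hx : x ≤ 1) :
    pwinDeriv n x ≤ pwinDeriv m x := by
  refine add_le_add_right (Finset.sum_le_sum_of_subset_of_nonneg
    (Finset.Icc_subset_Icc_right hnm) fun k hk _ => ?_) _
  have hk2 : (2 : ℝ) ≤ k := by exact_mod_cast (Finset.mem_Icc.mp hk).1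
  exact div_nonneg (pow_nonneg (by linarith) _) (by linarith)

lemma strictConcaveOn_pwin {n : ℕ} (hn : 2 ≤ n) : StrictConcaveOn ℝ (Set.Icc 0 1) (pwin n) := by
  refine StrictAntiOn.strictConcaveOn_of_deriv (convex_Icc 0 1) (continuous_pwin n).continuousOn ?_
  rw [deriv_pwin, interior_Icc]
  exact (pwinDeriv_strictAntiOn hn).mono Set.Ioo_subset_Icc_self

/-- If `xn` is the maximum point of `p_n` on `[0,1]` (`n ≥ 3`) and `0 ≤ x < y ≤ xn`,
then the `y`-strategy strictly dominates the `x`-strategy on `{n, n+1, …}`. -/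
theorem stmt8 (n : ℕ) (hn : 3 ≤ n) (xn : ℝ) (hxn : xn ∈ Set.Icc (0:ℝ) 1)
    (hmax : IsMaxOn (pwin n) (Set.Icc (0:ℝ) 1) xn)
    (x y : ℝ) (hx : 0 ≤ x) (hxy : x < y) (hy : y ≤ xn)
    (m : ℕ) (hm : n ≤ m) : pwin m x < pwin m y := by
  have hmono : StrictMonoOn (pwin m) (Set.Icc 0 xn) := by
    refine strictMonoOn_of_deriv_pos (convex_Icc 0 xn) (continuous_pwin m).continuousOn ?_
    intro s hs
    rw [interior_Icc] at hs
    have hs1 : s ≤ 1 := hs.2.le.trans hxn.2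
    have hpos : 0 < pwinDeriv n s :=
      (strictConcaveOn_pwin (by omega)).pos_of_hasDerivAt_of_isMaxOn hmax ⟨hs.1.le, hs1⟩ hxn
        hs.2 (hasDerivAt_pwin n s)
    rw [deriv_pwin]
    exact hpos.trans_le (pwinDeriv_le_pwinDeriv hm hs1)
  exact hmono ⟨hx, hxy.le.trans hy⟩ ⟨hx.trans hxy.le, hy⟩ hxy
end

section
/- Let θ > 0 and let ν be the geometric distribution ν_n = θ(θ+1)^{-n} on the positive integers. Then for every x ∈ [0,1], Σ_{n=1}^{∞} ν_n p_n(x) = -(θ+x)·log((θ+x)/(θ+1)). Moreover, if 0 < θ ≤ 1/(e-1), the function x ↦ -(θ+x)·log((θ+x)/(θ+1)) attains its maximum over [0,1] at the unique point x* = 1/e - θ(e-1)/e, and the maximum value equals (θ+1)/e. -/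
/-!
With `q = (θ+1)⁻¹` the weights are `θ q^(n+1)`, and `p_(n+1)(x) = (1-x) - Σ_{k<n} d_k` with
`d_k = (1-x)^(k+2)/((k+2)(k+1))`. Weighting partial sums by a geometric sequence is a Cauchy
product with the geometric series, so the mixture equals `(1-x) - q Σ_k d_k q^k`. Splitting
`1/((k+2)(k+1)) = 1/(k+1) - 1/(k+2)` and using `-log(1-u) = Σ u^(k+1)/(k+1)` gives
`Σ_k u^(k+2)/((k+2)(k+1)) = u + (1-u) log(1-u)`, which evaluated at `u = (1-x)q` yields
`-(θ+x) log((θ+x)/(θ+1))`.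

This function of `x` is `(θ+1) · negMulLog ((θ+x)/(θ+1))`, and `negMulLog` has its unique
maximum `1/e` at `1/e` (from `log z < z - 1` for `z = 1/(e y) ≠ 1`); the condition
`θ ≤ 1/(e-1)` says exactly that the maximiser `θ + x = (θ+1)/e` has `x ≥ 0`.
-/

open Finset Real

theorem hasSum_pow_add_two_div_mul {u : ℝ} (hu : |u| < 1) :
    HasSum (fun k : ℕ => u ^ (k + 2) / ((k + 2) * (k + 1))) (u + (1 - u) * log (1 - u)) := by
  have hlog := hasSum_pow_div_log_of_abs_lt_one hu
  have hshift : HasSum (fun k : ℕ => u ^ (k + 2) / (k + 2)) (-log (1 - u) - u) := by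
    simpa [add_assoc, one_add_one_eq_two] using (hasSum_nat_add_iff' 1).2 hlog
  have hterm : (fun k : ℕ => u ^ (k + 2) / ((k + 2) * (k + 1)))
      = fun k : ℕ => u * (u ^ (k + 1) / (k + 1)) - u ^ (k + 2) / (k + 2) := by
    funext k
    field_simp
    ring
  rw [hterm, show u + (1 - u) * log (1 - u) = u * -log (1 - u) - (-log (1 - u) - u) by ring]
  exact (hlog.mul_left u).sub hshift

theorem pwin_succ (n : ℕ) (x : ℝ) :
    pwin (n + 1) x = 1 - x - ∑ k ∈ range n, (1 - x) ^ (k + 2) / ((k + 2) * (k + 1)) := by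
  rw [pwin, ← Ico_add_one_right_eq_Icc, sum_Ico_eq_sum_range]
  congr 1
  refine Finset.sum_congr rfl fun k _ => ?_
  push_cast
  ring

theorem hasSum_pow_mul_sum_range {b : ℕ → ℝ} {r s : ℝ} (hr : |r| < 1)
    (hb : HasSum (fun k => b k * r ^ k) s) :
    HasSum (fun n => r ^ n * ∑ k ∈ range n, b k) (r * s / (1 - r)) := by
  have hgeom := hasSum_geometric_of_abs_lt_one hr
  have hcauchy := hasSum_sum_range_mul_of_summable_norm (f := fun k => b k * r ^ k)
    (g := fun k => r ^ k) (summable_norm_iff.2 hb.summable) (summable_norm_iff.2 hgeom.summable)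
  rw [hb.tsum_eq, hgeom.tsum_eq] at hcauchy
  have hterm : ∀ n, r * ∑ k ∈ range (n + 1), b k * r ^ k * r ^ (n - k)
      = r ^ (n + 1) * ∑ k ∈ range (n + 1), b k := fun n => by
    rw [pow_succ', mul_assoc, mul_sum (range (n + 1)) b]
    congr 1
    refine Finset.sum_congr rfl fun k hk => ?_
    rw [mul_assoc, ← pow_add, Nat.add_sub_cancel' (mem_range_succ_iff.1 hk), mul_comm]
  refine (hasSum_nat_add_iff' 1).1 ?_
  simpa [← hterm, div_eq_mul_inv, mul_assoc] using hcauchy.mul_left r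

theorem hasSum_geometric_mul_pwin {θ x : ℝ} (hθ : 0 < θ) (hx : |1 - x| < θ + 1) :
    HasSum (fun n : ℕ => θ / (θ + 1) ^ (n + 1) * pwin (n + 1) x)
      (-(θ + x) * log ((θ + x) / (θ + 1))) := by
  have hθ1 : θ + 1 ≠ 0 := by positivity
  set q := (θ + 1)⁻¹ with hq_def
  have hq : |q| < 1 := by
    rw [abs_of_pos (by positivity)]
    exact inv_lt_one_of_one_lt₀ (by linarith)
  set u := (1 - x) * q with hu_def
  have hu : |u| < 1 := by
    rw [hu_def, abs_mul, abs_of_pos (by positivity : 0 < q), hq_def, ← div_eq_mul_inv]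
    exact (div_lt_one (by positivity)).2 hx
  have hd := (hasSum_pow_add_two_div_mul hu).mul_left ((θ + 1) ^ 2)
  have hdterm : ∀ k : ℕ, (θ + 1) ^ 2 * (u ^ (k + 2) / ((k + 2) * (k + 1)))
      = (1 - x) ^ (k + 2) / ((k + 2) * (k + 1)) * q ^ k := fun k => by
    have hq2 : (θ + 1) ^ 2 * q ^ 2 = 1 := by rw [hq_def, ← mul_pow, mul_inv_cancel₀ hθ1, one_pow]
    rw [hu_def, mul_pow, pow_add q k 2]
    linear_combination (1 - x) ^ (k + 2) / ((k + 2) * (k + 1)) * q ^ k * hq2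
  simp only [hdterm] at hd
  have hseries := (hasSum_geometric_of_abs_lt_one hq).mul_left (θ * q * (1 - x)) |>.sub
    ((hasSum_pow_mul_sum_range hq hd).mul_left (θ * q))
  have hterm : ∀ n : ℕ, θ * q * (1 - x) * q ^ n - θ * q * (q ^ n *
      ∑ k ∈ range n, (1 - x) ^ (k + 2) / ((k + 2) * (k + 1)))
      = θ / (θ + 1) ^ (n + 1) * pwin (n + 1) x := fun n => by
    rw [pwin_succ, hq_def, div_eq_mul_inv, ← inv_pow, pow_succ]
    ring
  have hvalue : θ * q * (1 - x) * (1 - q)⁻¹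
      - θ * q * (q * ((θ + 1) ^ 2 * (u + (1 - u) * log (1 - u))) / (1 - q))
      = -(θ + x) * log ((θ + x) / (θ + 1)) := by
    have h1u : 1 - u = (θ + x) / (θ + 1) := by
      rw [hu_def, hq_def]; field_simp; ring
    have h1q : 1 - q = θ / (θ + 1) := by
      rw [hq_def]; field_simp; ring
    rw [h1u, h1q, hu_def, hq_def]
    field_simp
    ring
  simpa only [hterm, hvalue] using hseries

theorem negMulLog_inv_exp_one : negMulLog (exp 1)⁻¹ = (exp 1)⁻¹ := by
  simp [negMulLog, log_inv]

theorem negMulLog_lt_inv_exp_one {y : ℝ} (hy : 0 ≤ y) (hne : y ≠ (exp 1)⁻¹) :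
    negMulLog y < (exp 1)⁻¹ := by
  rcases hy.eq_or_lt with rfl | hy
  · simp [exp_pos]
  have hz : (exp 1 * y)⁻¹ ≠ 1 := by
    rw [Ne, inv_eq_one]
    contrapose! hne
    exact eq_inv_of_mul_eq_one_right hne
  have hlog := log_lt_sub_one_of_pos (by positivity) hz
  rw [log_inv, log_mul (exp_ne_zero 1) hy.ne', log_exp] at hlog
  have : -log y < (exp 1 * y)⁻¹ := by linarith
  calc negMulLog y = y * -log y := by simp [negMulLog]
    _ < y * (exp 1 * y)⁻¹ := by gcongr
    _ = (exp 1)⁻¹ := by field_simp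

theorem neg_mul_log_div_eq_mul_negMulLog {c : ℝ} (v : ℝ) (hc : c ≠ 0) :
    -v * log (v / c) = c * negMulLog (v / c) := by
  rw [negMulLog]
  field_simp

theorem neg_mul_log_div_lt {c v : ℝ} (hc : 0 < c) (hv : 0 ≤ v) (hne : v ≠ c / exp 1) :
    -v * log (v / c) < c / exp 1 := by
  rw [neg_mul_log_div_eq_mul_negMulLog v hc.ne', div_eq_mul_inv c]
  refine mul_lt_mul_of_pos_left (negMulLog_lt_inv_exp_one (by positivity) fun h => hne ?_) hc
  rw [div_eq_iff hc.ne'] at h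
  rw [h, mul_comm, div_eq_mul_inv]

theorem neg_mul_log_div_exp_one_div {c : ℝ} (hc : c ≠ 0) :
    -(c / exp 1) * log (c / exp 1 / c) = c / exp 1 := by
  rw [neg_mul_log_div_eq_mul_negMulLog _ hc, div_div_cancel_left' hc, negMulLog_inv_exp_one,
    div_eq_mul_inv]

theorem isMaxOn_neg_mul_log_add_div {a c x₀ : ℝ} {s : Set ℝ} (hc : 0 < c)
    (hs : ∀ x ∈ s, 0 ≤ a + x) (hx₀ : a + x₀ = c / exp 1) (hx₀s : x₀ ∈ s) :
    IsMaxOn (fun x => -(a + x) * log ((a + x) / c)) s x₀ ∧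
      ∀ y ∈ s, IsMaxOn (fun x => -(a + x) * log ((a + x) / c)) s y → y = x₀ := by
  have hval : -(a + x₀) * log ((a + x₀) / c) = c / exp 1 := by
    rw [hx₀]
    exact neg_mul_log_div_exp_one_div hc.ne'
  have hlt : ∀ x ∈ s, x ≠ x₀ → -(a + x) * log ((a + x) / c) < c / exp 1 := fun x hx hne =>
    neg_mul_log_div_lt hc (hs x hx) (by rwa [← hx₀, Ne, add_right_inj])
  refine ⟨isMaxOn_iff.2 fun x hx => ?_, fun y hy hymax => ?_⟩
  · rcases eq_or_ne x x₀ with rfl | hne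
    · exact le_rfl
    · exact (hlt x hx hne).le.trans_eq hval.symm
  · by_contra hne
    linarith [hlt y hy hne, isMaxOn_iff.1 hymax x₀ hx₀s]

/-- Against the geometric prior `ν_n = θ(θ+1)^{-n}` (`n ≥ 1`) the `x`-strategy wins with
probability `-(θ+x)log((θ+x)/(θ+1))`; for `0 < θ ≤ 1/(e-1)` the maximum over `x ∈ [0,1]`
is uniquely attained at `x* = 1/e - θ(e-1)/e`, with value `(θ+1)/e`. -/
theorem stmt9 (θ : ℝ) (hθ : 0 < θ) :
    (∀ x ∈ Set.Icc (0:ℝ) 1,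
      HasSum (fun n : ℕ => θ / (θ + 1) ^ (n + 1) * pwin (n + 1) x)
        (-(θ + x) * Real.log ((θ + x) / (θ + 1)))) ∧
    (θ ≤ 1 / (Real.exp 1 - 1) →
      (1 / Real.exp 1 - θ * (Real.exp 1 - 1) / Real.exp 1) ∈ Set.Icc (0:ℝ) 1 ∧
      IsMaxOn (fun x : ℝ => -(θ + x) * Real.log ((θ + x) / (θ + 1))) (Set.Icc (0:ℝ) 1)
        (1 / Real.exp 1 - θ * (Real.exp 1 - 1) / Real.exp 1) ∧
      (∀ y ∈ Set.Icc (0:ℝ) 1,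
        IsMaxOn (fun x : ℝ => -(θ + x) * Real.log ((θ + x) / (θ + 1))) (Set.Icc (0:ℝ) 1) y →
        y = 1 / Real.exp 1 - θ * (Real.exp 1 - 1) / Real.exp 1) ∧
      -(θ + (1 / Real.exp 1 - θ * (Real.exp 1 - 1) / Real.exp 1)) *
          Real.log ((θ + (1 / Real.exp 1 - θ * (Real.exp 1 - 1) / Real.exp 1)) / (θ + 1))
        = (θ + 1) / Real.exp 1) := by
  refine ⟨fun x ⟨hx0, hx1⟩ => hasSum_geometric_mul_pwin hθ
    (abs_lt.2 ⟨by linarith, by linarith⟩), fun hθe => ?_⟩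
  have hθ1 : 0 < θ + 1 := by linarith
  set xs := 1 / exp 1 - θ * (exp 1 - 1) / exp 1 with hxs_def
  have hxs : θ + xs = (θ + 1) / exp 1 := by
    rw [hxs_def]
    field_simp
    ring
  have hmem : xs ∈ Set.Icc (0:ℝ) 1 := by
    have he1 : 1 < exp 1 := one_lt_exp_iff.2 one_pos
    have hθe' : θ * (exp 1 - 1) ≤ 1 := (le_div_iff₀ (by linarith)).1 hθe
    constructor <;> rw [← add_le_add_iff_left θ, hxs]
    · rw [add_zero, le_div_iff₀ (by positivity)]
      linarith
    · rw [div_le_iff₀ (by positivity)]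
      nlinarith
  obtain ⟨hmax, huniq⟩ := isMaxOn_neg_mul_log_add_div hθ1 (fun x hx => by linarith [hx.1]) hxs hmem
  refine ⟨hmem, hmax, huniq, ?_⟩
  rw [hxs]
  exact neg_mul_log_div_exp_one_div hθ1.ne'
end
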